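/- With V^r, V¹ the explicit solutions above, if ∫_{r₀}^∞ s^{1−ℓ} f(s) ds = 0 then as r → ∞ both V^r(r) → 0 and V¹(r) → 0, provided additionally that r^{2+ℓ}|f| has growth such that r^{−2−ℓ}∫_{r₀}^r s^{2+ℓ}|f(s)|ds → 0 (e.g. f(s) = O(s^{−3−ε}) for some ε > 0). -/

import Mathlib

/-!
The terms `r^{-2-ℓ} ∫_{r₀}^r s^{2+ℓ} f` are controlled by the growth hypothesis. For the tail
`T(r) = ∫_r^∞ s^q f` with `q = 1 - ℓ`: if `q ≥ 0`, then `T(r) → 0` already gives `T = o(r^q)`.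
If `q < 0`, integrate by parts against the primitive `H(x) = ∫_{r₀}^x s^a f` with `a = 2 + ℓ`;
since `H = o(x^a)`, the boundary terms and the remaining integral `∫_r^∞ x^{q-a-1} H` are all
`o(r^q)`.
-/

open MeasureTheory Real Filter Set Asymptotics

section

variable {f : ℝ → ℝ} {r₀ a q : ℝ}

lemma abs_setIntegral_Ioc_rpow_mul_le (hr₀ : 0 ≤ r₀) (r : ℝ) :
    |∫ s in Ioc r₀ r, s ^ a * f s| ≤ ∫ s in Ioc r₀ r, s ^ a * |f s| := by
  refine abs_integral_le_integral_abs.trans_eq (setIntegral_congr_fun measurableSet_Ioc ?_)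
  intro s hs
  dsimp only
  rw [abs_mul, abs_of_nonneg (rpow_nonneg (hr₀.trans hs.1.le) a)]

lemma isLittleO_setIntegral_Ioc_rpow_mul (hr₀ : 0 ≤ r₀)
    (hgrow : Tendsto (fun r => r ^ (-a) * ∫ s in Ioc r₀ r, s ^ a * |f s|) atTop (nhds 0)) :
    (fun r => ∫ s in Ioc r₀ r, s ^ a * f s) =o[atTop] fun r => r ^ a := by
  have habs : (fun r => ∫ s in Ioc r₀ r, s ^ a * |f s|) =o[atTop] fun r => r ^ a := by
    rw [isLittleO_iff_tendsto' ((eventually_gt_atTop 0).mono fun r hr h =>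
      absurd h (rpow_pos_of_pos hr a).ne')]
    refine hgrow.congr' ((eventually_gt_atTop 0).mono fun r hr => ?_)
    rw [rpow_neg hr.le, ← div_eq_inv_mul]
  refine (isBigO_of_le' (c := 1) atTop fun r => ?_).trans_isLittleO habs
  rw [one_mul, norm_eq_abs, norm_eq_abs]
  exact (abs_setIntegral_Ioc_rpow_mul_le hr₀ r).trans (le_abs_self _)

lemma continuousOn_rpow_mul (hr₀ : 0 < r₀) (hf : ContinuousOn f (Ici r₀)) :
    ContinuousOn (fun s => s ^ a * f s) (Ici r₀) :=
  (continuousOn_id.rpow_const fun _ hs => Or.inl (hr₀.trans_le hs).ne').mul hf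

lemma hasDerivAt_integral_rpow_mul (hr₀ : 0 < r₀) (hf : ContinuousOn f (Ici r₀)) {x : ℝ}
    (hx : r₀ < x) :
    HasDerivAt (fun y => ∫ s in r₀..y, s ^ a * f s) (x ^ a * f x) x :=
  have hcont := continuousOn_rpow_mul (a := a) hr₀ hf
  intervalIntegral.integral_hasDerivAt_right
    ((hcont.mono (uIcc_of_le hx.le ▸ Icc_subset_Ici_self)).intervalIntegrable)
    ((hcont.mono Ioi_subset_Ici_self).stronglyMeasurableAtFilter isOpen_Ioi x hx)
    (hcont.continuousAt (Ici_mem_nhds hx))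

lemma intervalIntegral_rpow_mul_eq_by_parts (hr₀ : 0 < r₀) (hf : ContinuousOn f (Ici r₀))
    {r R : ℝ} (hr : r₀ < r) (hrR : r ≤ R) :
    ∫ x in r..R, x ^ q * f x =
      R ^ (q - a) * (∫ s in r₀..R, s ^ a * f s) - r ^ (q - a) * (∫ s in r₀..r, s ^ a * f s)
        - ∫ x in r..R, (q - a) * x ^ (q - a - 1) * ∫ s in r₀..x, s ^ a * f s := by
  have hsub : uIcc r R ⊆ Ioi r₀ := fun x hx => hr.trans_le (uIcc_of_le hrR ▸ hx).1
  have hpos : ∀ x ∈ uIcc r R, 0 < x := fun x hx => hr₀.trans (hsub hx)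
  have hprim : ∀ x ∈ uIcc r R,
      HasDerivAt (fun y => ∫ s in r₀..y, s ^ a * f s) (x ^ a * f x) x :=
    fun x hx => hasDerivAt_integral_rpow_mul hr₀ hf (hsub hx)
  rw [← intervalIntegral.integral_mul_deriv_eq_deriv_mul
    (fun x hx => hasDerivAt_rpow_const (Or.inl (hpos x hx).ne')) hprim ?_ ?_]
  · refine intervalIntegral.integral_congr fun x hx => ?_
    rw [← mul_assoc, ← rpow_add (hpos x hx), sub_add_cancel]
  · exact (continuousOn_const.mul
      (continuousOn_id.rpow_const fun x hx => Or.inl (hpos x hx).ne')).intervalIntegrable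
  · exact ((continuousOn_rpow_mul hr₀ hf).mono
      fun x hx => mem_Ici.2 (hsub hx).le).intervalIntegrable

lemma abs_intervalIntegral_rpow_mul_le (hr₀ : 0 < r₀) (hf : ContinuousOn f (Ici r₀))
    (hq : q < 0) {r R ε : ℝ} (hr : r₀ < r) (hrR : r ≤ R)
    (hH : ∀ x, r ≤ x → |∫ s in r₀..x, s ^ a * f s| ≤ ε * x ^ a) :
    |∫ x in r..R, x ^ q * f x| ≤ (2 + |q - a| / -q) * ε * r ^ q := by
  set H := fun x => ∫ s in r₀..x, s ^ a * f s
  have hr0 : 0 < r := hr₀.trans hr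
  have hR0 : 0 < R := hr0.trans_le hrR
  have hε : 0 ≤ ε := nonneg_of_mul_nonneg_left ((abs_nonneg _).trans (hH r le_rfl))
    (rpow_pos_of_pos hr0 a)
  have hweight : ∀ b x, r ≤ x → x ^ b * |H x| ≤ ε * x ^ (b + a) := fun b x hx => by
    calc x ^ b * |H x| ≤ x ^ b * (ε * x ^ a) :=
          mul_le_mul_of_nonneg_left (hH x hx) (rpow_nonneg (hr0.trans_le hx).le _)
      _ = ε * x ^ (b + a) := by rw [mul_left_comm, ← rpow_add (hr0.trans_le hx)]
  have hboundary : ∀ x, r ≤ x → |x ^ (q - a) * H x| ≤ ε * r ^ q := fun x hx => by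
    rw [abs_mul, abs_of_pos (rpow_pos_of_pos (hr0.trans_le hx) _)]
    exact (sub_add_cancel q a ▸ hweight (q - a) x hx).trans
      (mul_le_mul_of_nonneg_left (rpow_le_rpow_of_nonpos hr0 hx hq.le) hε)
  have h0 : (0 : ℝ) ∉ uIcc r R := fun h => (hr0.trans_le (uIcc_of_le hrR ▸ h).1).false
  have hbulk : |∫ x in r..R, (q - a) * x ^ (q - a - 1) * H x| ≤ |q - a| * ε * r ^ q / -q := by
    calc _ ≤ ∫ x in r..R, |q - a| * (ε * x ^ (q - 1)) := by
          rw [← norm_eq_abs]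
          refine intervalIntegral.norm_integral_le_of_norm_le hrR (ae_of_all _ fun x hx => ?_) ?_
          · rw [norm_mul, norm_mul, norm_eq_abs, norm_eq_abs, norm_eq_abs,
              abs_of_pos (rpow_pos_of_pos (hr0.trans hx.1) _), mul_assoc]
            refine mul_le_mul_of_nonneg_left ((hweight _ x hx.1.le).trans_eq ?_) (abs_nonneg _)
            ring_nf
          · exact ((intervalIntegral.intervalIntegrable_rpow (Or.inr h0)).const_mul ε).const_mul _
      _ = |q - a| * (ε * ((R ^ q - r ^ q) / q)) := by
          rw [intervalIntegral.integral_const_mul, intervalIntegral.integral_const_mul,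
            integral_rpow (Or.inr ⟨by linarith, h0⟩), sub_add_cancel]
      _ ≤ |q - a| * ε * r ^ q / -q := by
          rw [← neg_div_neg_eq, neg_sub, mul_div_assoc, ← mul_assoc]
          gcongr
          · linarith
          · linarith [rpow_nonneg hR0.le q]
  rw [intervalIntegral_rpow_mul_eq_by_parts (a := a) hr₀ hf hr hrR]
  calc _ ≤ |R ^ (q - a) * H R| + |r ^ (q - a) * H r|
          + |∫ x in r..R, (q - a) * x ^ (q - a - 1) * H x| :=
        (abs_sub _ _).trans (add_le_add_left (abs_sub _ _) _)
    _ ≤ ε * r ^ q + ε * r ^ q + |q - a| * ε * r ^ q / -q :=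
        add_le_add_three (hboundary R hrR) (hboundary r le_rfl) hbulk
    _ = (2 + |q - a| / -q) * ε * r ^ q := by ring

lemma isLittleO_integral_Ioi_rpow_mul_of_neg (hr₀ : 0 < r₀) (hf : ContinuousOn f (Ici r₀))
    (hq : q < 0) (hint : IntegrableOn (fun s => s ^ q * f s) (Ioi r₀))
    (hH : (fun r => ∫ s in Ioc r₀ r, s ^ a * f s) =o[atTop] fun r => r ^ a) :
    (fun r => ∫ s in Ioi r, s ^ q * f s) =o[atTop] fun r => r ^ q := by
  refine IsLittleO.of_bound fun δ hδ => ?_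
  set K := 2 + |q - a| / -q
  have hK : 0 < K :=
    add_pos_of_pos_of_nonneg two_pos (div_nonneg (abs_nonneg _) (neg_nonneg.2 hq.le))
  obtain ⟨N, hN⟩ := eventually_atTop.1 (hH.bound (div_pos hδ hK))
  filter_upwards [eventually_gt_atTop (max r₀ N)] with r hr
  have hr₀r : r₀ < r := (le_max_left _ _).trans_lt hr
  have hprim : ∀ x, r ≤ x → |∫ s in r₀..x, s ^ a * f s| ≤ δ / K * x ^ a := fun x hx => by
    have hr₀x : r₀ < x := hr₀r.trans_le hx
    have := hN x ((le_max_right _ _).trans (hr.le.trans hx))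
    rwa [norm_eq_abs, norm_eq_abs, abs_of_pos (rpow_pos_of_pos (hr₀.trans hr₀x) _),
      ← intervalIntegral.integral_of_le hr₀x.le] at this
  have hbound : |∫ s in Ioi r, s ^ q * f s| ≤ δ * r ^ q := by
    refine le_of_tendsto (intervalIntegral_tendsto_integral_Ioi r
      (hint.mono_set (Ioi_subset_Ioi hr₀r.le)) tendsto_id).abs ?_
    filter_upwards [eventually_ge_atTop r] with R hR
    calc _ ≤ K * (δ / K) * r ^ q := abs_intervalIntegral_rpow_mul_le hr₀ hf hq hr₀r hR hprim
      _ = δ * r ^ q := by rw [mul_div_cancel₀ _ hK.ne']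
  rwa [norm_eq_abs, norm_eq_abs, abs_of_pos (rpow_pos_of_pos (hr₀.trans hr₀r) _)]

lemma isLittleO_integral_Ioi_rpow_mul_of_nonneg (hq : 0 ≤ q) :
    (fun r => ∫ s in Ioi r, s ^ q * f s) =o[atTop] fun r => r ^ q := by
  refine (isLittleO_one_iff ℝ).2 (tendsto_integral_Ioi_zero tendsto_id) |>.trans_isBigO ?_
  refine IsBigO.of_bound' ((eventually_ge_atTop 1).mono fun r hr => ?_)
  rw [norm_one, norm_eq_abs, abs_of_pos (rpow_pos_of_pos (zero_lt_one.trans_le hr) _)]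
  exact one_le_rpow hr hq

lemma tendsto_rpow_neg_mul_of_isLittleO {g : ℝ → ℝ} (hg : g =o[atTop] fun r => r ^ q) :
    Tendsto (fun r => r ^ (-q) * g r) atTop (nhds 0) :=
  hg.tendsto_div_nhds_zero.congr' ((eventually_gt_atTop 0).mono fun r hr => by
    dsimp only
    rw [rpow_neg hr.le, div_eq_inv_mul])

end

theorem stmt10_general (ℓ : ℕ) (r₀ : ℝ) (hr₀ : 0 < r₀) (f : ℝ → ℝ)
    (hf : ContinuousOn f (Set.Ici r₀))
    (hint : IntegrableOn (fun s => s ^ ((1 : ℝ) - (ℓ : ℝ)) * f s) (Set.Ioi r₀))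
    (Vr V₁ : ℝ → ℝ)
    (hVr : ∀ r, Vr r =
      ((ℓ : ℝ) * ((ℓ : ℝ) + 1) / r ^ ((2 : ℝ) + (ℓ : ℝ))) *
        (∫ s in Set.Ioc r₀ r, s ^ ((2 : ℝ) + (ℓ : ℝ)) * f s) +
      (ℓ : ℝ) * ((ℓ : ℝ) + 1) * r ^ ((ℓ : ℝ) - 1) *
        (∫ s in Set.Ioi r, s ^ ((1 : ℝ) - (ℓ : ℝ)) * f s))
    (hV₁ : ∀ r, V₁ r =
      -((ℓ : ℝ) / r ^ ((2 : ℝ) + (ℓ : ℝ))) *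
        (∫ s in Set.Ioc r₀ r, s ^ ((2 : ℝ) + (ℓ : ℝ)) * f s) +
      ((ℓ : ℝ) + 1) * r ^ ((ℓ : ℝ) - 1) *
        (∫ s in Set.Ioi r, s ^ ((1 : ℝ) - (ℓ : ℝ)) * f s))
    (hgrow : Tendsto
      (fun r => r ^ (-(2 : ℝ) - (ℓ : ℝ)) *
        ∫ s in Set.Ioc r₀ r, s ^ ((2 : ℝ) + (ℓ : ℝ)) * |f s|) atTop (nhds 0)) :
    Tendsto Vr atTop (nhds 0) ∧ Tendsto V₁ atTop (nhds 0) := by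
  rw [← neg_add'] at hgrow
  have hH := isLittleO_setIntegral_Ioc_rpow_mul hr₀.le hgrow
  have hT : (fun r => ∫ s in Ioi r, s ^ ((1 : ℝ) - ℓ) * f s) =o[atTop]
      fun r => r ^ ((1 : ℝ) - ℓ) := by
    rcases le_or_gt 0 ((1 : ℝ) - ℓ) with hq | hq
    · exact isLittleO_integral_Ioi_rpow_mul_of_nonneg hq
    · exact isLittleO_integral_Ioi_rpow_mul_of_neg hr₀ hf hq hint hH
  have hT' := tendsto_rpow_neg_mul_of_isLittleO hT
  rw [neg_sub] at hT'
  have decay : ∀ (c₁ c₂ : ℝ) (V : ℝ → ℝ),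
      (∀ r, V r = c₁ * ((∫ s in Ioc r₀ r, s ^ ((2 : ℝ) + ℓ) * f s) / r ^ ((2 : ℝ) + ℓ)) +
        c₂ * (r ^ ((ℓ : ℝ) - 1) * ∫ s in Ioi r, s ^ ((1 : ℝ) - ℓ) * f s)) →
      Tendsto V atTop (nhds 0) := fun c₁ c₂ V hV => by
    simpa [← funext hV] using (hH.tendsto_div_nhds_zero.const_mul c₁).add (hT'.const_mul c₂)
  exact ⟨decay (ℓ * (ℓ + 1)) (ℓ * (ℓ + 1)) Vr fun r => by rw [hVr]; ring,
    decay (-ℓ) (ℓ + 1) V₁ fun r => by rw [hV₁]; ring⟩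

/-- under the zero-moment condition and the growth condition
r^{−2−ℓ} ∫_{r₀}^r s^{2+ℓ}|f| → 0, the explicit solutions decay at infinity. -/
theorem stmt10 (ℓ : ℕ) (hℓ : 1 ≤ ℓ) (r₀ : ℝ) (hr₀ : 0 < r₀) (f : ℝ → ℝ)
    (hf : ContinuousOn f (Set.Ici r₀))
    (hint : IntegrableOn (fun s => s ^ ((1 : ℝ) - (ℓ : ℝ)) * f s) (Set.Ioi r₀))
    (Vr V₁ : ℝ → ℝ)
    (hVr : ∀ r, Vr r =
      ((ℓ : ℝ) * ((ℓ : ℝ) + 1) / r ^ ((2 : ℝ) + (ℓ : ℝ))) *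
        (∫ s in Set.Ioc r₀ r, s ^ ((2 : ℝ) + (ℓ : ℝ)) * f s) +
      (ℓ : ℝ) * ((ℓ : ℝ) + 1) * r ^ ((ℓ : ℝ) - 1) *
        (∫ s in Set.Ioi r, s ^ ((1 : ℝ) - (ℓ : ℝ)) * f s))
    (hV₁ : ∀ r, V₁ r =
      -((ℓ : ℝ) / r ^ ((2 : ℝ) + (ℓ : ℝ))) *
        (∫ s in Set.Ioc r₀ r, s ^ ((2 : ℝ) + (ℓ : ℝ)) * f s) +
      ((ℓ : ℝ) + 1) * r ^ ((ℓ : ℝ) - 1) *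
        (∫ s in Set.Ioi r, s ^ ((1 : ℝ) - (ℓ : ℝ)) * f s))
    (hmom : (∫ s in Set.Ioi r₀, s ^ ((1 : ℝ) - (ℓ : ℝ)) * f s) = 0)
    (hgrow : Tendsto
      (fun r => r ^ (-(2 : ℝ) - (ℓ : ℝ)) *
        ∫ s in Set.Ioc r₀ r, s ^ ((2 : ℝ) + (ℓ : ℝ)) * |f s|) atTop (nhds 0)) :
    Tendsto Vr atTop (nhds 0) ∧ Tendsto V₁ atTop (nhds 0) :=
  stmt10_general ℓ r₀ hr₀ f hf hint Vr V₁ hVr hV₁ hgrow
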